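/- Let f : ℝⁿ → ℝ, g : ℝⁿ → ℝ ∪ {+∞} proper, κ ≥ 0, and for i = 1,…,p let Ψ_i : ℝⁿ → ℝ^{m_i} be differentiable with L_i-Lipschitz derivative (in operator norm), and let c_i : ℝ^{m_i} → ℝ ∪ {+∞} be proper convex. Fix x ∈ ℝⁿ with g(x) < +∞, y_i ∈ ℝ^{m_i} with c_i(y_i) < +∞, and parameters α ≥ 0, λ ≥ 0, μ_i > 0 and γ with 0 < γ < (2κ + Σ_{i=1}^p L_i‖y_i‖)^{−1}. Let v ∈ ℝⁿ satisfy the κ-descent inequality for f at x; let x̂ minimize u ↦ g(u) + (1/(2γ))‖u − (x + γ Σ_{i=1}^p DΨ_i(x)* y_i − γ v)‖²; for each i let ŷ_i minimize u ↦ c_i(u) + (1/(2μ_i))‖u − (y_i + μ_i Ψ_i(x̂))‖². Set d := x̂ − x, e := (ŷ_1 − y_1, …, ŷ_p − y_p), (x⁺, y⁺) := (x̂, ŷ) + λ(d, e), and assume the line-search inequality Φ(x⁺, y⁺) ≤ Φ(x̂, ŷ) − α λ² ‖(d,e)‖². Then Φ(x⁺, y⁺) ≤ Φ(x, y) − a‖x⁺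 − x‖² − Σ_{i=1}^p b_i‖y_i⁺ − y_i‖², where a := (2αλ² + γ^{−1} − 2κ − Σ_{i=1}^p L_i‖y_i‖) / (2(1+λ)²) > 0 and b_i := (1 + αλ²μ_i)/(μ_i(1+λ)²) > 0. -/

import Mathlib

/-!
The double-proximal step alone decreases `Φ` by
`(1/(2γ) - κ - Σᵢ Lᵢ‖yᵢ‖/2)‖x̂ - x‖² + Σᵢ ‖ŷᵢ - yᵢ‖²/μᵢ`. On the primal side this comes from
testing the proximal inequality for `g` at `x` and the κ-descent inequality for `f`. On the dual
side, convexity of `cᵢ` turns the proximal inequality into the subgradient inequality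
`(yᵢ + μᵢ Ψᵢ x̂ - ŷᵢ)/μᵢ ∈ ∂cᵢ(ŷᵢ)`, and the quadratic Taylor bound
`‖Ψᵢ x̂ - Ψᵢ x - DΨᵢ(x)(x̂ - x)‖ ≤ Lᵢ/2 ‖x̂ - x‖²` replaces `Ψᵢ x̂` by its linearization at `x`,
whose linear part cancels `⟪x̂ - x, Σᵢ DΨᵢ(x)* yᵢ⟫`. The line search adds `αλ²‖(d, e)‖²`, and
`x⁺ - x = (1 + λ) d`, `y⁺ - y = (1 + λ) e` turn the total into the stated coefficients.
-/

open scoped BigOperators RealInnerProductSpace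
open Set Filter Topology

@[simp, norm_cast]
theorem EReal.coe_finset_sum {ι : Type*} (s : Finset ι) (q : ι → ℝ) :
    ((∑ i ∈ s, q i : ℝ) : EReal) = ∑ i ∈ s, (q i : EReal) :=
  map_sum (⟨⟨(↑), EReal.coe_zero⟩, EReal.coe_add⟩ : ℝ →+ EReal) q s

theorem EReal.exists_eq_coe {a : EReal} (htop : a ≠ ⊤) (hbot : a ≠ ⊥) : ∃ r : ℝ, a = r :=
  ⟨_, (EReal.coe_toReal htop hbot).symm⟩

theorem le_of_forall_le_add_mul {a b C : ℝ} (h : ∀ t, 0 < t → t ≤ 1 → a ≤ b + t * C) :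
    a ≤ b := by
  have hlim : Tendsto (fun t : ℝ => b + t * C) (𝓝[>] 0) (𝓝 b) := by
    refine Tendsto.mono_left ?_ nhdsWithin_le_nhds
    exact Continuous.tendsto' (by fun_prop) 0 b (by simp)
  refine ge_of_tendsto hlim ?_
  filter_upwards [Ioc_mem_nhdsGT one_pos] with t ht using h t ht.1 ht.2

section Descent

variable {E F : Type*} [NormedAddCommGroup E] [NormedSpace ℝ E]
  [NormedAddCommGroup F] [NormedSpace ℝ F]

theorem norm_sub_sub_fderiv_le_of_lipschitz_fderiv {Ψ : E → F} {L : ℝ}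
    (hdiff : Differentiable ℝ Ψ)
    (hlip : ∀ a b, ‖fderiv ℝ Ψ a - fderiv ℝ Ψ b‖ ≤ L * ‖a - b‖) (a b : E) :
    ‖Ψ b - Ψ a - fderiv ℝ Ψ a (b - a)‖ ≤ L / 2 * ‖b - a‖ ^ 2 := by
  set d := b - a
  set φ : ℝ → F := fun t => Ψ (a + t • d) - t • fderiv ℝ Ψ a d - Ψ a
  have hφ' : ∀ t : ℝ, HasDerivAt φ (fderiv ℝ Ψ (a + t • d) d - fderiv ℝ Ψ a d) t := by
    intro t
    have hline : HasDerivAt (fun t : ℝ => a + t • d) d t := by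
      simpa using ((hasDerivAt_id t).smul_const d).const_add a
    have hlin : HasDerivAt (fun t : ℝ => t • fderiv ℝ Ψ a d) (fderiv ℝ Ψ a d) t := by
      simpa using (hasDerivAt_id t).smul_const (fderiv ℝ Ψ a d)
    exact (((hdiff _).hasFDerivAt.comp_hasDerivAt t hline).sub hlin).sub_const (Ψ a)
  have hbound : ∀ t ∈ Icc (0 : ℝ) 1, ‖φ t‖ ≤ L * ‖d‖ ^ 2 / 2 * t ^ 2 := by
    refine image_norm_le_of_norm_deriv_right_le_deriv_boundary
      (B' := fun t => L * ‖d‖ ^ 2 * t)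
      (fun t _ => (hφ' t).continuousAt.continuousWithinAt)
      (fun t _ => (hφ' t).hasDerivWithinAt) (by simp [φ]) (fun t => ?_) (fun t ht => ?_)
    · exact ((hasDerivAt_pow 2 t).const_mul (L * ‖d‖ ^ 2 / 2)).congr_deriv (by norm_num; ring)
    · calc ‖fderiv ℝ Ψ (a + t • d) d - fderiv ℝ Ψ a d‖
          ≤ ‖fderiv ℝ Ψ (a + t • d) - fderiv ℝ Ψ a‖ * ‖d‖ :=
            (fderiv ℝ Ψ (a + t • d) - fderiv ℝ Ψ a).le_opNorm d
        _ ≤ L * ‖a + t • d - a‖ * ‖d‖ := by gcongr; exact hlip _ _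
        _ = L * ‖d‖ ^ 2 * t := by
            rw [add_sub_cancel_left, norm_smul, Real.norm_of_nonneg ht.1]
            ring
  have h1 : φ 1 = Ψ b - Ψ a - fderiv ℝ Ψ a d := by
    simp only [φ, d, one_smul, add_sub_cancel, sub_right_comm]
  calc ‖Ψ b - Ψ a - fderiv ℝ Ψ a d‖ ≤ L * ‖d‖ ^ 2 / 2 * 1 ^ 2 := h1 ▸ hbound 1 (by simp)
    _ = L / 2 * ‖d‖ ^ 2 := by ring

end Descent

section Proximal

variable {E : Type*} [NormedAddCommGroup E]

/-- `xh ∈ prox_{t h}(w)`. -/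
def IsProximalPoint (h : E → EReal) (t : ℝ) (w xh : E) : Prop :=
  ∀ u, h xh + (((1 / (2 * t)) * ‖xh - w‖ ^ 2 : ℝ) : EReal)
    ≤ h u + (((1 / (2 * t)) * ‖u - w‖ ^ 2 : ℝ) : EReal)

variable {h : E → EReal} {t : ℝ} {w xh : E}

theorem IsProximalPoint.ne_top (hp : IsProximalPoint h t w xh) {u : E} (hu : h u ≠ ⊤) :
    h xh ≠ ⊤ :=
  (EReal.add_ne_top_iff_ne_top_left (EReal.coe_ne_bot _) (EReal.coe_ne_top _)).1 <|
    ne_top_of_le_ne_top (EReal.add_ne_top hu (EReal.coe_ne_top _)) (hp u)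

variable [InnerProductSpace ℝ E]

theorem IsProximalPoint.le_sub_add_inner {x u : E} {a b : ℝ} (ht : 0 < t)
    (hp : IsProximalPoint h t (x + t • u) xh) (hxh : h xh = a) (hx : h x = b) :
    a ≤ b - 1 / (2 * t) * ‖xh - x‖ ^ 2 + ⟪xh - x, u⟫ := by
  have hreal : a + 1 / (2 * t) * ‖xh - (x + t • u)‖ ^ 2
      ≤ b + 1 / (2 * t) * ‖x - (x + t • u)‖ ^ 2 := by
    have := hp x
    rwa [hxh, hx, ← EReal.coe_add, ← EReal.coe_add, EReal.coe_le_coe_iff] at this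
  have hleft : ‖xh - (x + t • u)‖ ^ 2 = ‖xh - x‖ ^ 2 - 2 * t * ⟪xh - x, u⟫ + t ^ 2 * ‖u‖ ^ 2 := by
    rw [← sub_sub, norm_sub_sq_real, real_inner_smul_right, norm_smul, Real.norm_of_nonneg ht.le]
    ring
  have hright : ‖x - (x + t • u)‖ ^ 2 = t ^ 2 * ‖u‖ ^ 2 := by
    rw [sub_add_cancel_left, norm_neg, norm_smul, Real.norm_of_nonneg ht.le, mul_pow]
  rw [hleft, hright] at hreal
  linear_combination hreal + ⟪xh - x, u⟫ * mul_inv_cancel₀ ht.ne'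

theorem IsProximalPoint.le_add_inner_of_convex
    (hconv : ∀ u v : E, ∀ a b : ℝ, 0 ≤ a → 0 ≤ b → a + b = 1 →
      h (a • u + b • v) ≤ (a : EReal) * h u + (b : EReal) * h v)
    (hp : IsProximalPoint h t w xh) {x : E} {a b : ℝ} (hxh : h xh = a) (hx : h x = b) :
    a ≤ b + 1 / t * ⟪xh - w, x - xh⟫ := by
  refine le_of_forall_le_add_mul (C := 1 / (2 * t) * ‖x - xh‖ ^ 2) fun s hs hs1 => ?_
  have hreal : a + 1 / (2 * t) * ‖xh - w‖ ^ 2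
      ≤ (1 - s) * a + s * b + 1 / (2 * t) * ‖(1 - s) • xh + s • x - w‖ ^ 2 := by
    have hseg := hconv xh x (1 - s) s (by linarith) hs.le (by ring)
    rw [hxh, hx, ← EReal.coe_mul, ← EReal.coe_mul, ← EReal.coe_add] at hseg
    have := (hp _).trans (add_le_add_left hseg _)
    rwa [hxh, ← EReal.coe_add, ← EReal.coe_add, EReal.coe_le_coe_iff] at this
  have hnorm : ‖(1 - s) • xh + s • x - w‖ ^ 2
      = ‖xh - w‖ ^ 2 + 2 * s * ⟪xh - w, x - xh⟫ + s ^ 2 * ‖x - xh‖ ^ 2 := by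
    rw [show (1 - s) • xh + s • x - w = (xh - w) + s • (x - xh) by module, norm_add_sq_real,
      real_inner_smul_right, norm_smul, Real.norm_of_nonneg hs.le]
    ring
  rw [hnorm] at hreal
  refine le_of_mul_le_mul_left ?_ hs
  linear_combination hreal

theorem IsProximalPoint.le_sub_add_inner_of_convex
    (hconv : ∀ u v : E, ∀ a b : ℝ, 0 ≤ a → 0 ≤ b → a + b = 1 →
      h (a • u + b • v) ≤ (a : EReal) * h u + (b : EReal) * h v)
    (ht : 0 < t) {x u : E} (hp : IsProximalPoint h t (x + t • u) xh) {a b : ℝ}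
    (hxh : h xh = a) (hx : h x = b) :
    a ≤ b - 1 / t * ‖xh - x‖ ^ 2 + ⟪xh - x, u⟫ := by
  have key := hp.le_add_inner_of_convex hconv hxh hx
  have hinner : ⟪xh - (x + t • u), x - xh⟫ = -‖xh - x‖ ^ 2 + t * ⟪xh - x, u⟫ := by
    rw [← sub_sub, ← neg_sub xh x, inner_neg_right, inner_sub_left, real_inner_smul_left,
      real_inner_self_eq_norm_sq, real_inner_comm u]
    ring
  rw [hinner] at key
  linear_combination key + ⟪xh - x, u⟫ * mul_inv_cancel₀ ht.ne'

end Proximal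

theorem primal_prox_step_le {E : Type*} [NormedAddCommGroup E] [InnerProductSpace ℝ E]
    {f : E → ℝ} {g : E → EReal} {κ γ : ℝ} {x xh u v : E} {a b : ℝ}
    (hγ : 0 < γ) (hv : ∀ z, f z ≤ f x + ⟪v, z - x⟫ + κ * ‖z - x‖ ^ 2)
    (hp : IsProximalPoint g γ (x + γ • (u - v)) xh) (hxh : g xh = a) (hx : g x = b) :
    f xh + a ≤ f x + b - (1 / (2 * γ) - κ) * ‖xh - x‖ ^ 2 + ⟪xh - x, u⟫ := by
  have hprox := hp.le_sub_add_inner hγ hxh hx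
  rw [inner_sub_right] at hprox
  linarith [hv xh, real_inner_comm v (xh - x)]

theorem dual_prox_step_le {E F : Type*} [NormedAddCommGroup E] [NormedSpace ℝ E]
    [NormedAddCommGroup F] [InnerProductSpace ℝ F] {Ψ : E → F} {L μ : ℝ} {c : F → EReal}
    (hdiff : Differentiable ℝ Ψ) (hlip : ∀ a b, ‖fderiv ℝ Ψ a - fderiv ℝ Ψ b‖ ≤ L * ‖a - b‖)
    (hconv : ∀ u v : F, ∀ a b : ℝ, 0 ≤ a → 0 ≤ b → a + b = 1 →
      c (a • u + b • v) ≤ (a : EReal) * c u + (b : EReal) * c v)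
    (hμ : 0 < μ) {x xh : E} {y yh : F} (hp : IsProximalPoint c μ (y + μ • Ψ xh) yh)
    {a b : ℝ} (hyh : c yh = a) (hy : c y = b) :
    a - ⟪Ψ xh, yh⟫ ≤ b - ⟪Ψ x, y⟫ - 1 / μ * ‖yh - y‖ ^ 2 + L * ‖y‖ / 2 * ‖xh - x‖ ^ 2
      - ⟪fderiv ℝ Ψ x (xh - x), y⟫ := by
  have hprox := hp.le_sub_add_inner_of_convex hconv hμ hyh hy
  have hlin : ⟪-(Ψ xh - Ψ x - fderiv ℝ Ψ x (xh - x)), y⟫ ≤ L / 2 * ‖xh - x‖ ^ 2 * ‖y‖ :=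
    (real_inner_le_norm _ _).trans <| norm_neg (Ψ xh - Ψ x - _) ▸ mul_le_mul_of_nonneg_right
      (norm_sub_sub_fderiv_le_of_lipschitz_fderiv hdiff hlip x xh) (norm_nonneg y)
  rw [inner_neg_left, inner_sub_left, inner_sub_left] at hlin
  rw [inner_sub_left] at hprox
  have hcomm : L / 2 * ‖xh - x‖ ^ 2 * ‖y‖ = L * ‖y‖ / 2 * ‖xh - x‖ ^ 2 := by ring
  linarith [real_inner_comm (Ψ xh) yh, real_inner_comm (Ψ xh) y]

theorem norm_add_smul_sub_sub_sq {E : Type*} [SeminormedAddCommGroup E] [NormedSpace ℝ E]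
    (x xh : E) (lam : ℝ) : ‖xh + lam • (xh - x) - x‖ ^ 2 = (1 + lam) ^ 2 * ‖xh - x‖ ^ 2 := by
  rw [show xh + lam • (xh - x) - x = (1 + lam) • (xh - x) by module, norm_smul, mul_pow,
    Real.norm_eq_abs, sq_abs]

theorem double_prox_step_decrease {E ι : Type*} [NormedAddCommGroup E] [InnerProductSpace ℝ E]
    [CompleteSpace E] [Fintype ι] {F : ι → Type*} [∀ i, NormedAddCommGroup (F i)]
    [∀ i, InnerProductSpace ℝ (F i)] [∀ i, CompleteSpace (F i)]
    {f : E → ℝ} {g : E → EReal} {Ψ : ∀ i, E → F i} {c : ∀ i, F i → EReal} {κ γ : ℝ}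
    {L μ : ι → ℝ} (hΨdiff : ∀ i, Differentiable ℝ (Ψ i))
    (hΨlip : ∀ i a b, ‖fderiv ℝ (Ψ i) a - fderiv ℝ (Ψ i) b‖ ≤ L i * ‖a - b‖)
    (hc_convex : ∀ i, ∀ u v : F i, ∀ a b : ℝ, 0 ≤ a → 0 ≤ b → a + b = 1 →
      c i (a • u + b • v) ≤ (a : EReal) * c i u + (b : EReal) * c i v)
    (hγ : 0 < γ) (hμ : ∀ i, 0 < μ i) {x xh v : E} {y yh : ∀ i, F i}
    (hv : ∀ z, f z ≤ f x + ⟪v, z - x⟫ + κ * ‖z - x‖ ^ 2)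
    (hpx : IsProximalPoint g γ
      (x + γ • (∑ i, ContinuousLinearMap.adjoint (fderiv ℝ (Ψ i) x) (y i) - v)) xh)
    (hpy : ∀ i, IsProximalPoint (c i) (μ i) (y i + μ i • Ψ i xh) (yh i))
    {gx gxh : ℝ} {cy cyh : ι → ℝ} (hgx : g x = gx) (hgxh : g xh = gxh)
    (hcy : ∀ i, c i (y i) = cy i) (hcyh : ∀ i, c i (yh i) = cyh i) :
    f xh + gxh + ∑ i, (cyh i - ⟪Ψ i xh, yh i⟫)
      ≤ f x + gx + ∑ i, (cy i - ⟪Ψ i x, y i⟫)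
        - (1 / (2 * γ) - κ - (∑ i, L i * ‖y i‖) / 2) * ‖xh - x‖ ^ 2
        - ∑ i, 1 / μ i * ‖yh i - y i‖ ^ 2 := by
  have hprimal := primal_prox_step_le hγ hv hpx hgxh hgx
  have hdual := Finset.sum_le_sum (s := Finset.univ) fun i _ =>
    dual_prox_step_le (x := x) (hΨdiff i) (hΨlip i) (hc_convex i) (hμ i) (hpy i) (hcyh i) (hcy i)
  simp only [Finset.sum_sub_distrib, Finset.sum_add_distrib, ← Finset.sum_mul,
    ← Finset.sum_div] at hdual ⊢
  simp only [inner_sum, ContinuousLinearMap.adjoint_inner_right] at hprimal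
  linarith

-- The step-size condition `γ < (2κ + Σᵢ Lᵢ‖yᵢ‖)⁻¹` is stated as `γ * (2κ + Σᵢ Lᵢ‖yᵢ‖) < 1`,
-- which reads `1/0 = +∞` as the paper does.
theorem bdsa_iteration_decrease_general {n p : ℕ} {m : Fin p → ℕ}
    (f : EuclideanSpace ℝ (Fin n) → ℝ)
    (g : EuclideanSpace ℝ (Fin n) → EReal)
    (hg_ne_bot : ∀ u, g u ≠ ⊥)
    (κ : ℝ)
    (Ψ : ∀ i, EuclideanSpace ℝ (Fin n) → EuclideanSpace ℝ (Fin (m i)))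
    (L : Fin p → ℝ)
    (hΨdiff : ∀ i, Differentiable ℝ (Ψ i))
    (hΨlip : ∀ i, ∀ a b : EuclideanSpace ℝ (Fin n),
      ‖fderiv ℝ (Ψ i) a - fderiv ℝ (Ψ i) b‖ ≤ L i * ‖a - b‖)
    (c : ∀ i, EuclideanSpace ℝ (Fin (m i)) → EReal)
    (hc_ne_bot : ∀ i u, c i u ≠ ⊥)
    (hc_convex : ∀ i, ∀ u v : EuclideanSpace ℝ (Fin (m i)), ∀ a b : ℝ,
      0 ≤ a → 0 ≤ b → a + b = 1 →
        c i (a • u + b • v) ≤ (a : EReal) * c i u + (b : EReal) * c i v)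
    (x : EuclideanSpace ℝ (Fin n)) (hx : g x < ⊤)
    (y : ∀ i, EuclideanSpace ℝ (Fin (m i))) (hy : ∀ i, c i (y i) < ⊤)
    (α lam : ℝ) (hα : 0 ≤ α) (hlam : 0 ≤ lam)
    (μ : Fin p → ℝ) (hμ0 : ∀ i, 0 < μ i)
    (γ : ℝ) (hγ0 : 0 < γ) (hγ : γ * (2 * κ + ∑ i, L i * ‖y i‖) < 1)
    (v : EuclideanSpace ℝ (Fin n))
    (hv : ∀ z, f z ≤ f x + ⟪v, z - x⟫ + κ * ‖z - x‖ ^ 2)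
    (xh : EuclideanSpace ℝ (Fin n))
    (hxh : ∀ u : EuclideanSpace ℝ (Fin n),
      g xh + (((1 / (2 * γ)) *
          ‖xh - (x + γ • ∑ i, (ContinuousLinearMap.adjoint (fderiv ℝ (Ψ i) x)) (y i)
            - γ • v)‖ ^ 2 : ℝ) : EReal)
        ≤ g u + (((1 / (2 * γ)) *
          ‖u - (x + γ • ∑ i, (ContinuousLinearMap.adjoint (fderiv ℝ (Ψ i) x)) (y i)
            - γ • v)‖ ^ 2 : ℝ) : EReal))
    (yh : ∀ i, EuclideanSpace ℝ (Fin (m i)))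
    (hyh : ∀ i, ∀ u : EuclideanSpace ℝ (Fin (m i)),
      c i (yh i) + (((1 / (2 * μ i)) * ‖yh i - (y i + (μ i) • Ψ i xh)‖ ^ 2 : ℝ) : EReal)
        ≤ c i u + (((1 / (2 * μ i)) * ‖u - (y i + (μ i) • Ψ i xh)‖ ^ 2 : ℝ) : EReal))
    (xp : EuclideanSpace ℝ (Fin n)) (hxp : xp = xh + lam • (xh - x))
    (yp : ∀ i, EuclideanSpace ℝ (Fin (m i))) (hyp : ∀ i, yp i = yh i + lam • (yh i - y i))
    (hlinesearch :
      ((f xp : ℝ) : EReal) + g xp + ∑ i, (c i (yp i) - ((⟪Ψ i xp, yp i⟫ : ℝ) : EReal))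
        ≤ ((f xh : ℝ) : EReal) + g xh + ∑ i, (c i (yh i) - ((⟪Ψ i xh, yh i⟫ : ℝ) : EReal))
          - ((α * lam ^ 2 * (‖xh - x‖ ^ 2 + ∑ i, ‖yh i - y i‖ ^ 2) : ℝ) : EReal)) :
    0 < (2 * α * lam ^ 2 + γ⁻¹ - 2 * κ - ∑ i, L i * ‖y i‖) / (2 * (1 + lam) ^ 2)
      ∧ (∀ i, 0 < (1 + α * lam ^ 2 * μ i) / (μ i * (1 + lam) ^ 2))
      ∧ ((f xp : ℝ) : EReal) + g xp + ∑ i, (c i (yp i) - ((⟪Ψ i xp, yp i⟫ : ℝ) : EReal))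
          ≤ ((f x : ℝ) : EReal) + g x + ∑ i, (c i (y i) - ((⟪Ψ i x, y i⟫ : ℝ) : EReal))
            - ((((2 * α * lam ^ 2 + γ⁻¹ - 2 * κ - ∑ i, L i * ‖y i‖) / (2 * (1 + lam) ^ 2))
                  * ‖xp - x‖ ^ 2
                + ∑ i, ((1 + α * lam ^ 2 * μ i) / (μ i * (1 + lam) ^ 2))
                  * ‖yp i - y i‖ ^ 2 : ℝ) : EReal) := by
  have hpx : IsProximalPoint g γ
      (x + γ • (∑ i, ContinuousLinearMap.adjoint (fderiv ℝ (Ψ i) x) (y i) - v)) xh := by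
    rw [smul_sub, ← add_sub_assoc]
    exact hxh
  have hpy : ∀ i, IsProximalPoint (c i) (μ i) (y i + μ i • Ψ i xh) (yh i) := hyh
  have hγT : 2 * κ + ∑ i, L i * ‖y i‖ < γ⁻¹ := by rwa [inv_eq_one_div, lt_div_iff₀' hγ0]
  refine ⟨div_pos (by nlinarith [mul_nonneg hα (sq_nonneg lam)]) (by positivity),
    fun i => have := hμ0 i; div_pos (by positivity) (by positivity), ?_⟩
  obtain ⟨gx, hgx⟩ := EReal.exists_eq_coe hx.ne (hg_ne_bot x)
  obtain ⟨gxh, hgxh⟩ := EReal.exists_eq_coe (hpx.ne_top hx.ne) (hg_ne_bot xh)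
  choose cy hcy using fun i => EReal.exists_eq_coe (hy i).ne (hc_ne_bot i (y i))
  choose cyh hcyh using fun i =>
    EReal.exists_eq_coe ((hpy i).ne_top (hy i).ne) (hc_ne_bot i (yh i))
  have hstep :=
    double_prox_step_decrease hΨdiff hΨlip hc_convex hγ0 hμ0 hv hpx hpy hgx hgxh hcy hcyh
  have hcoeff_x : (2 * α * lam ^ 2 + γ⁻¹ - 2 * κ - ∑ i, L i * ‖y i‖) / (2 * (1 + lam) ^ 2)
      * ((1 + lam) ^ 2 * ‖xh - x‖ ^ 2)
      = (1 / (2 * γ) - κ - (∑ i, L i * ‖y i‖) / 2 + α * lam ^ 2) * ‖xh - x‖ ^ 2 := by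
    field_simp
    ring
  have hcoeff_y : ∀ i, (1 + α * lam ^ 2 * μ i) / (μ i * (1 + lam) ^ 2)
      * ((1 + lam) ^ 2 * ‖yh i - y i‖ ^ 2) = (1 / μ i + α * lam ^ 2) * ‖yh i - y i‖ ^ 2 := by
    intro i
    have := (hμ0 i).ne'
    field_simp
  simp only [hgx, hgxh, hcy, hcyh, hxp, hyp, norm_add_smul_sub_sub_sq, hcoeff_x, hcoeff_y]
    at hlinesearch ⊢
  refine hlinesearch.trans ?_
  norm_cast
  simp only [Finset.sum_sub_distrib, add_mul, Finset.sum_add_distrib, ← Finset.mul_sum] at hstep ⊢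
  linarith

/-- Proposition 3.6, inequality (3.11): one full iteration of the Boosted Double-proximal
Subgradient Algorithm (double-proximal step plus line-search step) decreases the primal-dual
objective `Φ` by a positive multiple of the squared step lengths.  Here the condition
`0 < γ < (2κ + Σᵢ Lᵢ‖yᵢ‖)⁻¹` (with the paper's convention `1/0 = +∞`) is encoded as
`0 < γ` and `γ * (2κ + Σᵢ Lᵢ‖yᵢ‖) < 1`. -/
theorem bdsa_iteration_decrease {n p : ℕ} {m : Fin p → ℕ}
    (f : EuclideanSpace ℝ (Fin n) → ℝ)
    (g : EuclideanSpace ℝ (Fin n) → EReal)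
    (hg_ne_bot : ∀ u, g u ≠ ⊥) (hg_proper : ∃ u, g u ≠ ⊤)
    (κ : ℝ) (hκ : 0 ≤ κ)
    (Ψ : ∀ i, EuclideanSpace ℝ (Fin n) → EuclideanSpace ℝ (Fin (m i)))
    (L : Fin p → ℝ)
    (hΨdiff : ∀ i, Differentiable ℝ (Ψ i))
    (hΨlip : ∀ i, ∀ a b : EuclideanSpace ℝ (Fin n),
      ‖fderiv ℝ (Ψ i) a - fderiv ℝ (Ψ i) b‖ ≤ L i * ‖a - b‖)
    (c : ∀ i, EuclideanSpace ℝ (Fin (m i)) → EReal)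
    (hc_ne_bot : ∀ i u, c i u ≠ ⊥) (hc_proper : ∀ i, ∃ u, c i u ≠ ⊤)
    (hc_convex : ∀ i, ∀ u v : EuclideanSpace ℝ (Fin (m i)), ∀ a b : ℝ,
      0 ≤ a → 0 ≤ b → a + b = 1 →
        c i (a • u + b • v) ≤ (a : EReal) * c i u + (b : EReal) * c i v)
    (x : EuclideanSpace ℝ (Fin n)) (hx : g x < ⊤)
    (y : ∀ i, EuclideanSpace ℝ (Fin (m i))) (hy : ∀ i, c i (y i) < ⊤)
    (α lam : ℝ) (hα : 0 ≤ α) (hlam : 0 ≤ lam)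
    (μ : Fin p → ℝ) (hμ0 : ∀ i, 0 < μ i)
    (γ : ℝ) (hγ0 : 0 < γ) (hγ : γ * (2 * κ + ∑ i, L i * ‖y i‖) < 1)
    (v : EuclideanSpace ℝ (Fin n))
    (hv : ∀ z, f z ≤ f x + ⟪v, z - x⟫ + κ * ‖z - x‖ ^ 2)
    (xh : EuclideanSpace ℝ (Fin n))
    (hxh : ∀ u : EuclideanSpace ℝ (Fin n),
      g xh + (((1 / (2 * γ)) *
          ‖xh - (x + γ • ∑ i, (ContinuousLinearMap.adjoint (fderiv ℝ (Ψ i) x)) (y i)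
            - γ • v)‖ ^ 2 : ℝ) : EReal)
        ≤ g u + (((1 / (2 * γ)) *
          ‖u - (x + γ • ∑ i, (ContinuousLinearMap.adjoint (fderiv ℝ (Ψ i) x)) (y i)
            - γ • v)‖ ^ 2 : ℝ) : EReal))
    (yh : ∀ i, EuclideanSpace ℝ (Fin (m i)))
    (hyh : ∀ i, ∀ u : EuclideanSpace ℝ (Fin (m i)),
      c i (yh i) + (((1 / (2 * μ i)) * ‖yh i - (y i + (μ i) • Ψ i xh)‖ ^ 2 : ℝ) : EReal)
        ≤ c i u + (((1 / (2 * μ i)) * ‖u - (y i + (μ i) • Ψ i xh)‖ ^ 2 : ℝ) : EReal))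
    (xp : EuclideanSpace ℝ (Fin n)) (hxp : xp = xh + lam • (xh - x))
    (yp : ∀ i, EuclideanSpace ℝ (Fin (m i))) (hyp : ∀ i, yp i = yh i + lam • (yh i - y i))
    (hlinesearch :
      ((f xp : ℝ) : EReal) + g xp + ∑ i, (c i (yp i) - ((⟪Ψ i xp, yp i⟫ : ℝ) : EReal))
        ≤ ((f xh : ℝ) : EReal) + g xh + ∑ i, (c i (yh i) - ((⟪Ψ i xh, yh i⟫ : ℝ) : EReal))
          - ((α * lam ^ 2 * (‖xh - x‖ ^ 2 + ∑ i, ‖yh i - y i‖ ^ 2) : ℝ) : EReal)) :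
    0 < (2 * α * lam ^ 2 + γ⁻¹ - 2 * κ - ∑ i, L i * ‖y i‖) / (2 * (1 + lam) ^ 2)
      ∧ (∀ i, 0 < (1 + α * lam ^ 2 * μ i) / (μ i * (1 + lam) ^ 2))
      ∧ ((f xp : ℝ) : EReal) + g xp + ∑ i, (c i (yp i) - ((⟪Ψ i xp, yp i⟫ : ℝ) : EReal))
          ≤ ((f x : ℝ) : EReal) + g x + ∑ i, (c i (y i) - ((⟪Ψ i x, y i⟫ : ℝ) : EReal))
            - ((((2 * α * lam ^ 2 + γ⁻¹ - 2 * κ - ∑ i, L i * ‖y i‖) / (2 * (1 + lam) ^ 2))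
                  * ‖xp - x‖ ^ 2
                + ∑ i, ((1 + α * lam ^ 2 * μ i) / (μ i * (1 + lam) ^ 2))
                  * ‖yp i - y i‖ ^ 2 : ℝ) : EReal) :=
  bdsa_iteration_decrease_general f g hg_ne_bot κ Ψ L hΨdiff hΨlip c hc_ne_bot hc_convex x hx y hy α
    lam hα hlam μ hμ0 γ hγ0 hγ v hv xh hxh yh hyh xp hxp yp hyp hlinesearch
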